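/- For every ω in the piecewise polynomial space V_h^k (with periodic trace identification) and every integer p ≥ 2, the Godunov-flux nonlinear form is nonnegative on the diagonal: N^d(ω,ω) ≥ 0. -/

import Mathlib

open Polynomial Set

noncomputable section

namespace FW

variable {N : ℕ}

/-- Minus trace `ω⁻` at interface `j+1/2` (right end of cell `j`). -/
def trM (x : Fin (N + 1) → ℝ) (ω : Fin N → Polynomial ℝ) (j : Fin N) : ℝ :=
  (ω j).eval (x j.succ)

/-- Plus trace `ω⁺` at interface `j+1/2` (left end of the next cell, cyclically). -/
def trP [NeZero N] (x : Fin (N + 1) → ℝ) (ω : Fin N → Polynomial ℝ) (j : Fin N) : ℝ :=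
  (ω (j + 1)).eval (x (j + 1).castSucc)

/-- Average trace `{ω}`. -/
def trA [NeZero N] (x : Fin (N + 1) → ℝ) (ω : Fin N → Polynomial ℝ) (j : Fin N) : ℝ :=
  (trP x ω j + trM x ω j) / 2

/-- Jump `[ω]`. -/
def jmp [NeZero N] (x : Fin (N + 1) → ℝ) (ω : Fin N → Polynomial ℝ) (j : Fin N) : ℝ :=
  trP x ω j - trM x ω j

/-- Cell L² pairing `(u, φ)_{I_j}` of a piecewise polynomial with a test polynomial. -/
def ipj (x : Fin (N + 1) → ℝ) (u : Fin N → Polynomial ℝ) (j : Fin N) (φ : Polynomial ℝ) : ℝ :=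
  ∫ t in (x j.castSucc)..(x j.succ), (u j).eval t * φ.eval t

/-- Cell pairing `(f∘u, φ)_{I_j}`. -/
def ipfj (x : Fin (N + 1) → ℝ) (f : ℝ → ℝ) (u : Fin N → Polynomial ℝ) (j : Fin N)
    (φ : Polynomial ℝ) : ℝ :=
  ∫ t in (x j.castSucc)..(x j.succ), f ((u j).eval t) * φ.eval t

/-- Boundary pairing `⟨g, φ⟩_{I_j}` for interface values `g`. -/
def bdj [NeZero N] (x : Fin (N + 1) → ℝ) (g : Fin N → ℝ) (j : Fin N) (φ : Polynomial ℝ) : ℝ :=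
  g j * φ.eval (x j.succ) - g (j - 1) * φ.eval (x j.castSucc)

/-- Membership in the space `V_h^k` of piecewise polynomials of degree at most `k`. -/
def memV (k : ℕ) (ω : Fin N → Polynomial ℝ) : Prop :=
  ∀ j, (ω j).degree ≤ (k : WithBot ℕ)

/-- `L⁻(ω, φ)`. -/
def Lm [NeZero N] (x : Fin (N + 1) → ℝ) (ω φ : Fin N → Polynomial ℝ) : ℝ :=
  ∑ j, (-(ipj x ω j (derivative (φ j))) + bdj x (trM x ω) j (φ j))

/-- `L⁺(ω, φ)`. -/
def Lp [NeZero N] (x : Fin (N + 1) → ℝ) (ω φ : Fin N → Polynomial ℝ) : ℝ :=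
  ∑ j, (-(ipj x ω j (derivative (φ j))) + bdj x (trP x ω) j (φ j))

/-- `L^c(ω, φ)`. -/
def Lc [NeZero N] (x : Fin (N + 1) → ℝ) (ω φ : Fin N → Polynomial ℝ) : ℝ :=
  ∑ j, (-(ipj x ω j (derivative (φ j))) + bdj x (trA x ω) j (φ j))

/-- Godunov numerical flux. -/
def godunov (f : ℝ → ℝ) (c d : ℝ) : ℝ :=
  if c < d then sInf (f '' Set.Icc c d) else sSup (f '' Set.Icc d c)

/-- Conservative numerical flux for `f(u) = u^p/p`, `F(u) = u^(p+1)/(p(p+1))`. -/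
def consFlux (p : ℕ) (c d : ℝ) : ℝ :=
  if c = d then c ^ p / (p : ℝ)
  else (d ^ (p + 1) / ((p : ℝ) * ((p : ℝ) + 1)) - c ^ (p + 1) / ((p : ℝ) * ((p : ℝ) + 1))) / (d - c)

/-- Dissipative (Godunov-flux) nonlinear form `N^d`. -/
def Nd [NeZero N] (x : Fin (N + 1) → ℝ) (f : ℝ → ℝ) (ω φ : Fin N → Polynomial ℝ) : ℝ :=
  ∑ j, (-(ipfj x f ω j (derivative (φ j)))
    + bdj x (fun i => godunov f (trM x ω i) (trP x ω i)) j (φ j))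

/-- Conservative-flux nonlinear form `N^c`. -/
def Nc [NeZero N] (x : Fin (N + 1) → ℝ) (p : ℕ) (ω φ : Fin N → Polynomial ℝ) : ℝ :=
  ∑ j, (-(ipfj x (fun w => w ^ p / (p : ℝ)) ω j (derivative (φ j)))
    + bdj x (fun i => consFlux p (trM x ω i) (trP x ω i)) j (φ j))

end FW

/-!
Integrating `f(ω) ω'` over a cell gives `F(ω⁻_{j+1/2}) - F(ω⁺_{j-1/2})` for an antiderivative `F`
of `f`, so after a periodic shift of the boundary terms `N^d(ω, ω)` collects, interface by
interface, the quantity `∫_{ω⁻}^{ω⁺} f - f̂(ω⁻, ω⁺) (ω⁺ - ω⁻)`. This is nonnegative because the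
Godunov flux is the minimum of `f` between the traces when `ω⁻ < ω⁺` and the maximum otherwise.
-/

open Finset intervalIntegral

namespace FW

variable {N : ℕ} {f : ℝ → ℝ}

theorem godunov_mul_sub_le_integral (hf : Continuous f) (c d : ℝ) :
    godunov f c d * (d - c) ≤ ∫ t in c..d, f t := by
  rw [godunov]
  split_ifs with hcd
  · have hmin : ∀ t ∈ Set.Icc c d, sInf (f '' Set.Icc c d) ≤ f t := fun t ht =>
      csInf_le (isCompact_Icc.image hf).bddBelow (Set.mem_image_of_mem f ht)
    have hint := integral_mono_on (μ := MeasureTheory.volume) hcd.le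
      (continuous_const.intervalIntegrable _ _) (hf.intervalIntegrable c d) hmin
    rw [integral_const, smul_eq_mul] at hint
    linarith
  · have hmax : ∀ t ∈ Set.Icc d c, f t ≤ sSup (f '' Set.Icc d c) := fun t ht =>
      le_csSup (isCompact_Icc.image hf).bddAbove (Set.mem_image_of_mem f ht)
    have hint := integral_mono_on (μ := MeasureTheory.volume) (not_lt.mp hcd)
      (hf.intervalIntegrable d c) (continuous_const.intervalIntegrable _ _) hmax
    rw [integral_const, smul_eq_mul] at hint
    rw [integral_symm]
    linarith

theorem ipfj_derivative_self (hf : Continuous f) (x : Fin (N + 1) → ℝ)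
    (u : Fin N → Polynomial ℝ) (j : Fin N) :
    ipfj x f u j (derivative (u j)) = ∫ t in (u j).eval (x j.castSucc)..trM x u j, f t :=
  integral_comp_mul_deriv (fun t _ => (u j).hasDerivAt t) (derivative (u j)).continuousOn hf

theorem trP_sub_one [NeZero N] (x : Fin (N + 1) → ℝ) (u : Fin N → Polynomial ℝ) (j : Fin N) :
    trP x u (j - 1) = (u j).eval (x j.castSucc) := by
  simp [trP]

theorem Nd_self_eq [NeZero N] (hf : Continuous f) (x : Fin (N + 1) → ℝ)
    (ω : Fin N → Polynomial ℝ) :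
    Nd x f ω ω = ∑ j, ((∫ t in trM x ω j..trP x ω j, f t)
      - godunov f (trM x ω j) (trP x ω j) * (trP x ω j - trM x ω j)) := by
  set F : ℝ → ℝ := fun y => ∫ t in (0 : ℝ)..y, f t
  have hF : ∀ c d, ∫ t in c..d, f t = F d - F c := fun c d =>
    (integral_interval_sub_left (hf.intervalIntegrable _ _) (hf.intervalIntegrable _ _)).symm
  set g : Fin N → ℝ := fun i => godunov f (trM x ω i) (trP x ω i)
  set A : Fin N → ℝ := fun j => F (trP x ω j) - g j * trP x ω j
  set B : Fin N → ℝ := fun j => g j * trM x ω j - F (trM x ω j)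
  calc Nd x f ω ω = ∑ j, (B j + A (j - 1)) := by
        refine sum_congr rfl fun j _ => ?_
        rw [ipfj_derivative_self hf, ← trP_sub_one, hF, bdj, ← trP_sub_one]
        simp only [A, B, g, trM]
        ring
    _ = ∑ j, (B j + A j) := by
        rw [sum_add_distrib, sum_add_distrib,
          Fintype.sum_equiv (Equiv.subRight 1) (fun j => A (j - 1)) A fun _ => rfl]
    _ = _ := by
        refine sum_congr rfl fun j _ => ?_
        rw [hF]
        ring

theorem Nd_self_nonneg [NeZero N] (hf : Continuous f) (x : Fin (N + 1) → ℝ)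
    (ω : Fin N → Polynomial ℝ) : 0 ≤ Nd x f ω ω := by
  rw [Nd_self_eq hf]
  exact sum_nonneg fun j _ => sub_nonneg.mpr (godunov_mul_sub_le_integral hf _ _)

end FW

theorem stmt5_general {N : ℕ} [NeZero N] (x : Fin (N + 1) → ℝ) (p : ℕ) (ω : Fin N → Polynomial ℝ) :
    0 ≤ FW.Nd x (fun w => w ^ p / (p : ℝ)) ω ω :=
  FW.Nd_self_nonneg (by fun_prop) x ω

theorem stmt5 {N : ℕ} [NeZero N] (hN : 1 ≤ N) (a b : ℝ) (hab : a < b)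
    (x : Fin (N + 1) → ℝ) (hx : StrictMono x) (hxa : x 0 = a) (hxb : x (Fin.last N) = b)
    (k : ℕ) (p : ℕ) (hp : 2 ≤ p)
    (ω : Fin N → Polynomial ℝ) (hω : FW.memV k ω) :
    0 ≤ FW.Nd x (fun w => w ^ p / (p : ℝ)) ω ω :=
  stmt5_general x p ω
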